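/- Let α, β, γ, δ ∈ ℂ and let a be a positive integer such that for every prime p dividing a one has p^{α+δ} ≠ 1 and p^{2−α+β−γ+δ} ≠ 1. Then C_{(α,β),(γ,δ),a}(0) = τ_{−γ,β,−α,δ}(a). -/
import Mathlib

open Complex

/-- `ζ_p(s) = (1 - p^{-s})⁻¹`. -/
noncomputable def zetaP (p : ℕ) (s : ℂ) : ℂ := (1 - (p : ℂ) ^ (-s))⁻¹

/-- `τ_{α,β,γ,δ}(ℓ)`. -/
noncomputable def tauC (α β γ δ : ℂ) (ℓ : ℕ) : ℂ :=
  ∏ p ∈ ℓ.primeFactors,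
    (1 + (∑ j ∈ Finset.Icc 1 (ℓ.factorization p), (p : ℂ) ^ ((γ - δ) * j)) *
        zetaP p (2 + α + β + γ + δ) / (zetaP p (1 + α + γ) * zetaP p (1 + β + γ)))

/-- The Euler factor datum `C_{𝜶,𝜷,a}(s)` with `𝜶 = (α,β)`, `𝜷 = (γ,δ)`. -/
noncomputable def Cfun (α β γ δ : ℂ) (a : ℕ) (s : ℂ) : ℂ :=
  ∏ p ∈ a.primeFactors,
    (1 - (p : ℂ) ^ (-(2 - α + β - γ + δ)))⁻¹ * (1 - (p : ℂ) ^ (-(2 * s + α + δ)))⁻¹ *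
      ((1 - (p : ℂ) ^ (-((1 + (a.factorization p : ℂ)) * (2 * s + α + δ))))
        - ((p : ℂ) ^ (γ - δ) + (p : ℂ) ^ (-(2 * s + β + δ))) *
            (1 - (p : ℂ) ^ (-((a.factorization p : ℂ) * (2 * s + α + δ)))) / (p : ℂ)
        + (p : ℂ) ^ (α - β + γ - δ) *
            ((p : ℂ) ^ (-(2 * s + α + δ)) -
              (p : ℂ) ^ (-((a.factorization p : ℂ) * (2 * s + α + δ)))) / (p : ℂ) ^ 2)

lemma abstract_step (A B S N C Y1 Y2 : ℂ) (hA : A ≠ 0) (hB : B ≠ 0) (hC : C ≠ 0)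
    (hBC : B = -C) (hS : S = A * B - N * (Y1 * Y2)) :
    A⁻¹ * B⁻¹ * S = 1 + N / C * A⁻¹ * Y1 * Y2 := by
  subst hS hBC
  field_simp
  ring

/-- `C_{(α,β),(γ,δ),a}(0) = τ_{−γ,β,−α,δ}(a)` under the stated nonvanishing hypotheses. -/
theorem Cfun_zero_eq_tau (α β γ δ : ℂ) (a : ℕ) (ha : 0 < a)
    (h1 : ∀ p ∈ a.primeFactors, (p : ℂ) ^ (α + δ) ≠ 1)
    (h2 : ∀ p ∈ a.primeFactors, (p : ℂ) ^ (2 - α + β - γ + δ) ≠ 1) :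
    Cfun α β γ δ a 0 = tauC (-γ) β (-α) δ a := by
  unfold Cfun tauC
  refine Finset.prod_congr rfl fun p hp => ?_
  have hpp : p.Prime := Nat.prime_of_mem_primeFactors hp
  have hl : 1 ≤ a.factorization p :=
    hpp.factorization_pos_of_dvd ha.ne' (Nat.dvd_of_mem_primeFactors hp)
  have h1' := h1 p hp
  have h2' := h2 p hp
  set l := a.factorization p with hldef
  have hp0 : (p:ℂ) ≠ 0 := Nat.cast_ne_zero.mpr hpp.pos.ne'
  have hadd : ∀ y z : ℂ, (p:ℂ)^(y+z) = (p:ℂ)^y * (p:ℂ)^z := fun y z => cpow_add _ _ hp0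
  have hpinv : (p:ℂ)^(-(1:ℂ)) = (p:ℂ)⁻¹ := by rw [cpow_neg, cpow_one]
  have hg1ne1 : (p:ℂ)^(-(α+δ)) ≠ 1 := by
    rw [cpow_neg]
    exact fun h => h1' (inv_eq_one.mp h)
  simp only [zetaP]
  have r1 : (p:ℂ)^(-(2 * (0:ℂ) + α + δ)) = (p:ℂ)^(-(α+δ)) := by
    rw [show -(2 * (0:ℂ) + α + δ) = -(α+δ) from by ring]
  have r2 : (p:ℂ)^(-((1 + (l:ℂ)) * (2 * 0 + α + δ)))
      = (p:ℂ)^(-(α+δ)) * ((p:ℂ)^(-(α+δ)))^l := by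
    rw [show -((1 + (l:ℂ)) * (2 * (0:ℂ) + α + δ)) = -(α+δ) + (l:ℂ) * (-(α+δ)) from by ring,
      hadd (-(α+δ)) ((l:ℂ) * (-(α+δ))), cpow_nat_mul]
  have r5 : (p:ℂ)^(-((l:ℂ) * (2 * 0 + α + δ))) = ((p:ℂ)^(-(α+δ)))^l := by
    rw [show -((l:ℂ) * (2 * (0:ℂ) + α + δ)) = (l:ℂ) * (-(α+δ)) from by ring, cpow_nat_mul]
  have r3 : (p:ℂ)^(γ-δ) = (p:ℂ)^(α+γ) * (p:ℂ)^(-(α+δ)) := by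
    rw [show γ - δ = (α+γ) + -(α+δ) from by ring, hadd (α+γ) (-(α+δ))]
  have r4 : (p:ℂ)^(-(2 * (0:ℂ) + β + δ)) = (p:ℂ)^(α-β) * (p:ℂ)^(-(α+δ)) := by
    rw [show -(2 * (0:ℂ) + β + δ) = (α-β) + -(α+δ) from by ring, hadd (α-β) (-(α+δ))]
  have r6 : (p:ℂ)^(α-β+γ-δ) = (p:ℂ)^(α+γ) * ((p:ℂ)^(α-β) * (p:ℂ)^(-(α+δ))) := by
    rw [show α-β+γ-δ = (α+γ) + ((α-β) + -(α+δ)) from by ring,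
      hadd (α+γ) ((α-β) + -(α+δ)), hadd (α-β) (-(α+δ))]
  have r7 : (p:ℂ)^(-(2-α+β-γ+δ))
      = (p:ℂ)^(α+γ) * ((p:ℂ)^(α-β) * ((p:ℂ)^(-(α+δ)) * ((p:ℂ)⁻¹ * (p:ℂ)⁻¹))) := by
    rw [show -(2-α+β-γ+δ) = (α+γ) + ((α-β) + (-(α+δ) + (-(1:ℂ) + -(1:ℂ)))) from by ring,
      hadd (α+γ) ((α-β) + (-(α+δ) + (-(1:ℂ) + -(1:ℂ)))),
      hadd (α-β) (-(α+δ) + (-(1:ℂ) + -(1:ℂ))),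
      hadd (-(α+δ)) ((-(1:ℂ) + -(1:ℂ))), hadd (-(1:ℂ)) (-(1:ℂ)), hpinv]
  have r9 : (p:ℂ)^(-(1 + -γ + -α)) = (p:ℂ)^(α+γ) * (p:ℂ)⁻¹ := by
    rw [show -(1 + -γ + -α) = (α+γ) + -(1:ℂ) from by ring, hadd (α+γ) (-(1:ℂ)), hpinv]
  have r10 : (p:ℂ)^(-(1 + β + -α)) = (p:ℂ)^(α-β) * (p:ℂ)⁻¹ := by
    rw [show -(1 + β + -α) = (α-β) + -(1:ℂ) from by ring, hadd (α-β) (-(1:ℂ)), hpinv]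
  have rS : (∑ j ∈ Finset.Icc 1 l, (p:ℂ)^((-α - δ) * (j:ℂ)))
      = (((p:ℂ)^(-(α+δ)))^(l+1) - (p:ℂ)^(-(α+δ))) / ((p:ℂ)^(-(α+δ)) - 1) := by
    rw [Finset.sum_congr rfl (fun j _ => by
        rw [show (-α - δ) * (j:ℂ) = (j:ℂ) * (-(α+δ)) from by ring, cpow_nat_mul]),
      ← Finset.Ico_add_one_right_eq_Icc, geom_sum_Ico hg1ne1 (by omega), pow_one]
  have r8 : (2:ℂ) + -γ + β + -α + δ = 2 - α + β - γ + δ := by ring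
  have rd1 : ∀ X : ℂ, X / (p:ℂ) = X * (p:ℂ)⁻¹ := fun X => div_eq_mul_inv X _
  have rd2 : ∀ X : ℂ, X / (p:ℂ)^2 = X * ((p:ℂ)⁻¹ * (p:ℂ)⁻¹) := fun X => by
    rw [div_eq_mul_inv, sq, mul_inv]
  have hA : (1:ℂ) - (p:ℂ)^(α+γ) * ((p:ℂ)^(α-β) * ((p:ℂ)^(-(α+δ)) * ((p:ℂ)⁻¹ * (p:ℂ)⁻¹))) ≠ 0 := by
    rw [← r7, cpow_neg, sub_ne_zero]
    exact fun h => h2' (inv_eq_one.mp h.symm)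
  have hB : (1:ℂ) - (p:ℂ)^(-(α+δ)) ≠ 0 := sub_ne_zero.mpr (Ne.symm hg1ne1)
  have hC : (p:ℂ)^(-(α+δ)) - 1 ≠ 0 := sub_ne_zero.mpr hg1ne1
  rw [r8, rS, pow_succ ((p:ℂ)^(-(α+δ))) l, r1, r2, r5, r3, r4, r6, r7, r9, r10, rd2, rd1,
    div_mul_eq_div_div, div_inv_eq_mul, div_inv_eq_mul]
  exact abstract_step _ _ _ _ _ _ _ hA hB hC (by ring) (by ring)
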